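/- If the 3-stretch G of a graph H (with m' edges) has an independent set of size m' + k', then H has an independent set of size at least k'. -/

import Mathlib

open scoped Classical

noncomputable section

/-- The 3-stretch of a simple graph `H`: every edge `e = {u,v}` of `H`
(with endpoints labelled `(p e).1 = u` and `(p e).2 = v`) is replaced by the
path `u — (e,0) — (e,1) — v` with two fresh internal vertices. -/
def ThreeStretch {V : Type*} (H : SimpleGraph V) (p : H.edgeSet → V × V) :
    SimpleGraph (V ⊕ (H.edgeSet × Fin 2)) :=
  SimpleGraph.fromRel (fun x y =>
    match x, y with
    | Sum.inl u, Sum.inr (e, i) => (i = 0 ∧ u = (p e).1) ∨ (i = 1 ∧ u = (p e).2)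
    | Sum.inr (e, i), Sum.inr (f, j) => e = f ∧ i ≠ j
    | _, _ => False)

/-- `S` is an independent set of `G`: no two of its vertices are adjacent. -/
def IsIndep {V : Type*} (G : SimpleGraph V) (S : Finset V) : Prop :=
  ∀ u ∈ S, ∀ v ∈ S, ¬ G.Adj u v

/-!
Let `S` be independent in the 3-stretch, `A` its part in `V` and `R` its part among the internal
vertices. Each subdivided edge carries at most one vertex of `R`, and none when both of its
endpoints lie in `A`; so if `B` is the set of edges of `H` spanned by `A`, then `#R + #B ≤ m'`.
Deleting one endpoint of every edge in `B` leaves an independent set of `H` of size at least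
`#A - #B ≥ #A + #R - m' = k'`.
-/

namespace ThreeStretch

variable {V : Type*} {H : SimpleGraph V} {p : H.edgeSet → V × V}

lemma adj_inl_fst_inr_zero (e : H.edgeSet) :
    (ThreeStretch H p).Adj (.inl (p e).1) (.inr (e, 0)) := by
  simp [ThreeStretch]

lemma adj_inl_snd_inr_one (e : H.edgeSet) :
    (ThreeStretch H p).Adj (.inl (p e).2) (.inr (e, 1)) := by
  simp [ThreeStretch]

lemma adj_inr_inr {e : H.edgeSet} {i j : Fin 2} (hij : i ≠ j) :
    (ThreeStretch H p).Adj (.inr (e, i)) (.inr (e, j)) := by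
  simp [ThreeStretch, hij, hij.symm]

end ThreeStretch

section

variable {V : Type*} [Fintype V] {H : SimpleGraph V} [DecidableRel H.Adj]

def spannedEdges (p : H.edgeSet → V × V) (A : Finset V) : Finset H.edgeSet :=
  {e | (p e).1 ∈ A ∧ (p e).2 ∈ A}

open Finset ThreeStretch in
lemma card_toRight_add_card_spannedEdges_le {p : H.edgeSet → V × V}
    {S : Finset (V ⊕ (H.edgeSet × Fin 2))} (hS : IsIndep (ThreeStretch H p) S) :
    #S.toRight + #(spannedEdges p S.toLeft) ≤ #H.edgeFinset := by
  have hmaps : Set.MapsTo Prod.fst (S.toRight : Set (H.edgeSet × Fin 2))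
      ((spannedEdges p S.toLeft)ᶜ : Finset H.edgeSet) := by
    rintro ⟨e, i⟩ hei
    simp only [spannedEdges, coe_compl, Set.mem_compl_iff, mem_coe, mem_filter, mem_univ,
      mem_toLeft, true_and]
    intro hspanned
    simp only [mem_coe, mem_toRight] at hei
    fin_cases i
    · exact hS _ hspanned.1 _ hei (adj_inl_fst_inr_zero e)
    · exact hS _ hspanned.2 _ hei (adj_inl_snd_inr_one e)
  have hinj : Set.InjOn Prod.fst (S.toRight : Set (H.edgeSet × Fin 2)) := by
    rintro ⟨e, i⟩ hei ⟨f, j⟩ hfj (rfl : e = f)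
    by_contra hij
    exact hS _ (mem_toRight.1 hei) _ (mem_toRight.1 hfj)
      (adj_inr_inr fun h => hij (congrArg _ h))
  calc #S.toRight + #(spannedEdges p S.toLeft)
      ≤ #(spannedEdges p S.toLeft)ᶜ + #(spannedEdges p S.toLeft) := by
        gcongr; exact card_le_card_of_injOn Prod.fst hmaps hinj
    _ = #H.edgeFinset := by rw [card_compl_add_card, SimpleGraph.edgeFinset_card]

lemma isIndep_sdiff_image_spannedEdges {p : H.edgeSet → V × V}
    (hp : ∀ e : H.edgeSet, s((p e).1, (p e).2) = (e : Sym2 V)) (A : Finset V) :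
    IsIndep H (A \ (spannedEdges p A).image fun e => (p e).1) := by
  intro u hu v hv huv
  simp only [Finset.mem_sdiff, Finset.mem_image, not_exists, not_and] at hu hv
  let e : H.edgeSet := ⟨s(u, v), huv⟩
  have hpe : s((p e).1, (p e).2) = s(u, v) := hp e
  simp only [spannedEdges, Finset.mem_filter, Finset.mem_univ, true_and] at hu hv
  rcases Sym2.eq_iff.1 hpe with ⟨h1, h2⟩ | ⟨h1, h2⟩
  · exact hu.2 e ⟨h1 ▸ hu.1, h2 ▸ hv.1⟩ h1
  · exact hv.2 e ⟨h1 ▸ hv.1, h2 ▸ hu.1⟩ h1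

end

theorem indep_of_threeStretch_indep_general {V : Type*} [Fintype V]
    (H : SimpleGraph V) [DecidableRel H.Adj]
    (p : H.edgeSet → V × V) (hp : ∀ e : H.edgeSet, s((p e).1, (p e).2) = (e : Sym2 V))
    (m' k' : ℕ) (hm : H.edgeFinset.card = m')
    (h : ∃ S : Finset (V ⊕ (H.edgeSet × Fin 2)),
      IsIndep (ThreeStretch H p) S ∧ S.card = m' + k') :
    ∃ S : Finset V, IsIndep H S ∧ k' ≤ S.card := by
  obtain ⟨S, hS, hcard⟩ := h
  refine ⟨_, isIndep_sdiff_image_spannedEdges hp S.toLeft, ?_⟩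
  have hsplit := S.card_toLeft_add_card_toRight
  have hright := card_toRight_add_card_spannedEdges_le hS
  have hremoved : ((spannedEdges p S.toLeft).image fun e => (p e).1).card ≤
      (spannedEdges p S.toLeft).card := Finset.card_image_le
  have hleft := S.toLeft.card_le_card_sdiff_add_card
    (t := (spannedEdges p S.toLeft).image fun e => (p e).1)
  omega

/-- If the 3-stretch of `H` has an independent set of size `m' + k'`, where `m'`
is the number of edges of `H`, then `H` has an independent set of size at least `k'`. -/
theorem indep_of_threeStretch_indep {V : Type*} [Fintype V] [DecidableEq V]
    (H : SimpleGraph V) [DecidableRel H.Adj]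
    (p : H.edgeSet → V × V) (hp : ∀ e : H.edgeSet, s((p e).1, (p e).2) = (e : Sym2 V))
    (m' k' : ℕ) (hm : H.edgeFinset.card = m')
    (h : ∃ S : Finset (V ⊕ (H.edgeSet × Fin 2)),
      IsIndep (ThreeStretch H p) S ∧ S.card = m' + k') :
    ∃ S : Finset V, IsIndep H S ∧ k' ≤ S.card :=
  indep_of_threeStretch_indep_general H p hp m' k' hm h
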